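/- (Mean width of low-rank matrices) Let D = {X ∈ R^{d₁×d₂} : ‖X‖_F = 1, rank(X) ≤ r}. Then the Gaussian mean width satisfies w(D) ≤ 2√(2r(d₁+d₂)) (assuming Gordon's bound E‖G‖ ≤ √d₁+√d₂). -/

import Mathlib

open MeasureTheory ProbabilityTheory Real
open scoped Pointwise

/-- The singular values of a real `d₁ × d₂` matrix `X`: the square roots of the
eigenvalues of `Xᴴ * X = Xᵀ * X`. -/
noncomputable def singVals {d₁ d₂ : ℕ} (X : Matrix (Fin d₁) (Fin d₂) ℝ) : Fin d₂ → ℝ :=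
  fun i => Real.sqrt ((show (X.transpose * X).IsHermitian by
    simpa [Matrix.conjTranspose_eq_transpose_of_trivial] using
      Matrix.isHermitian_conjTranspose_mul_self X).eigenvalues i)

/-- Nuclear norm: sum of singular values. -/
noncomputable def nucNorm {d₁ d₂ : ℕ} (X : Matrix (Fin d₁) (Fin d₂) ℝ) : ℝ :=
  ∑ i, singVals X i

/-- Frobenius norm. -/
noncomputable def frobNorm {d₁ d₂ : ℕ} (X : Matrix (Fin d₁) (Fin d₂) ℝ) : ℝ :=
  Real.sqrt (∑ i, ∑ j, (X i j) ^ 2)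

/-- Operator (spectral) norm: the largest singular value. -/
noncomputable def opNorm {d₁ d₂ : ℕ} (X : Matrix (Fin d₁) (Fin d₂) ℝ) : ℝ :=
  ⨆ i, singVals X i

/-- Standard Gaussian measure on `d₁ × d₂` matrices (i.i.d. `N(0,1)` entries). -/
noncomputable def gaussMat (d₁ d₂ : ℕ) : Measure (Fin d₁ → Fin d₂ → ℝ) :=
  Measure.pi fun _ => Measure.pi fun _ => ProbabilityTheory.gaussianReal 0 1

/-- Gaussian mean width of a set of `d₁ × d₂` matrices, with the trace inner product
`⟨G, X⟩ = ∑ᵢⱼ Gᵢⱼ Xᵢⱼ`. -/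
noncomputable def matMeanWidth {d₁ d₂ : ℕ} (K : Set (Matrix (Fin d₁) (Fin d₂) ℝ)) : ℝ :=
  ∫ G, sSup ((fun X : Matrix (Fin d₁) (Fin d₂) ℝ => ∑ i, ∑ j, G i j * X i j) '' (K - K))
    ∂(gaussMat d₁ d₂)

/-!
A rank-`r` matrix `X` with `‖X‖_F = 1` has at most `r` nonzero singular values, whose squares sum
to `1`, so Cauchy–Schwarz gives `‖X‖_* ≤ √r`: the set lies in `√r` times the nuclear-norm ball.
On that ball, `⟨G, X⟩ ≤ ‖G‖ ‖X‖_*` (expand `⟨G, X⟩` in an orthonormal eigenbasis `(v_k)` of `XᵀX`: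
it equals `∑ ⟨G v_k, X v_k⟩` and `‖X v_k‖ = σ_k(X)`), so the supremum over differences is at most
`2√r ‖G‖`. Taking expectations and using Gordon's bound together with
`(√d₁ + √d₂)² ≤ 2 (d₁ + d₂)` gives the claim.
-/

open Matrix Finset

-- From here on `‖X‖` for a matrix is the operator norm `ℓ² → ℓ²`.
open scoped Matrix.Norms.L2Operator RealInnerProductSpace

namespace Matrix

theorem isHermitian_transpose_mul_self {m n : Type*} [Fintype m] (X : Matrix m n ℝ) :
    (Xᵀ * X).IsHermitian := by
  simpa [conjTranspose_eq_transpose_of_trivial] using isHermitian_conjTranspose_mul_self X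

theorem IsHermitian.toEuclideanLin_eigenvectorBasis {n : Type*} [Fintype n] [DecidableEq n]
    {A : Matrix n n ℝ} (hA : A.IsHermitian) (k : n) :
    toEuclideanLin A (hA.eigenvectorBasis k) = hA.eigenvalues k • hA.eigenvectorBasis k := by
  ext i
  simpa using congrFun (hA.mulVec_eigenvectorBasis k) i

variable {m n : Type*} [Fintype m] [Fintype n] [DecidableEq n]

theorem inner_toEuclideanLin_toEuclideanLin [DecidableEq m] (X : Matrix m n ℝ)
    (u x : EuclideanSpace ℝ n) :
    ⟪toEuclideanLin X u, toEuclideanLin X x⟫ = ⟪toEuclideanLin (Xᵀ * X) u, x⟫ := by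
  rw [← conjTranspose_eq_transpose_of_trivial, toLpLin_mul_same,
    toEuclideanLin_conjTranspose_eq_adjoint, LinearMap.comp_apply, LinearMap.adjoint_inner_left]

theorem inner_toEuclideanLin_eigenvectorBasis [DecidableEq m] (X : Matrix m n ℝ)
    (hX : (Xᵀ * X).IsHermitian) (k : n) (x : EuclideanSpace ℝ n) :
    ⟪toEuclideanLin X (hX.eigenvectorBasis k), toEuclideanLin X x⟫
      = hX.eigenvalues k * ⟪hX.eigenvectorBasis k, x⟫ := by
  rw [inner_toEuclideanLin_toEuclideanLin, hX.toEuclideanLin_eigenvectorBasis,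
    real_inner_smul_left]

theorem eigenvalues_transpose_mul_self_nonneg (X : Matrix m n ℝ) (hX : (Xᵀ * X).IsHermitian)
    (k : n) : 0 ≤ hX.eigenvalues k :=
  (posSemidef_conjTranspose_mul_self X).eigenvalues_nonneg k

theorem norm_toEuclideanLin_le (X : Matrix m n ℝ) (x : EuclideanSpace ℝ n) :
    ‖toEuclideanLin X x‖ ≤ ‖X‖ * ‖x‖ :=
  X.l2_opNorm_mulVec x

-- Parseval in the basis `b`, applied to the rows of `G` and `A`.
theorem sum_mul_eq_sum_inner_toEuclideanLin {ι : Type*} [Fintype ι] (G A : Matrix m n ℝ)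
    (b : OrthonormalBasis ι ℝ (EuclideanSpace ℝ n)) :
    ∑ i, ∑ j, G i j * A i j = ∑ k, ⟪toEuclideanLin G (b k), toEuclideanLin A (b k)⟫ := by
  calc ∑ i, ∑ j, G i j * A i j
      = ∑ i, ∑ k, ⟪WithLp.toLp 2 (G i), b k⟫ * ⟪b k, WithLp.toLp 2 (A i)⟫ := by
        refine Finset.sum_congr rfl fun i _ => ?_
        rw [b.sum_inner_mul_inner]
        simp [PiLp.inner_apply, mul_comm]
    _ = ∑ k, ⟪toEuclideanLin G (b k), toEuclideanLin A (b k)⟫ := by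
        rw [Finset.sum_comm]
        refine Finset.sum_congr rfl fun k _ => ?_
        simp [PiLp.inner_apply, mulVec, dotProduct, mul_comm]

end Matrix

section SingularValues

-- `hX` is arbitrary: by proof irrelevance `singVals` uses the same eigenvalues and eigenbasis.
variable {m n : ℕ} (X : Matrix (Fin m) (Fin n) ℝ) (hX : (Xᵀ * X).IsHermitian)

theorem singVals_eq_sqrt_eigenvalues (k : Fin n) : singVals X k = √(hX.eigenvalues k) := rfl

theorem sq_singVals (k : Fin n) : singVals X k ^ 2 = hX.eigenvalues k :=
  Real.sq_sqrt (eigenvalues_transpose_mul_self_nonneg X hX k)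

theorem norm_toEuclideanLin_eigenvectorBasis (k : Fin n) :
    ‖toEuclideanLin X (hX.eigenvectorBasis k)‖ = singVals X k := by
  rw [singVals_eq_sqrt_eigenvalues X hX, ← Real.sqrt_sq (norm_nonneg _),
    ← real_inner_self_eq_norm_sq, inner_toEuclideanLin_eigenvectorBasis,
    real_inner_self_eq_norm_sq, hX.eigenvectorBasis.orthonormal.1 k, one_pow, mul_one]

theorem norm_toEuclideanLin_sq (x : EuclideanSpace ℝ (Fin n)) :
    ‖toEuclideanLin X x‖ ^ 2 = ∑ k, hX.eigenvalues k * ⟪hX.eigenvectorBasis k, x⟫ ^ 2 := by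
  rw [← real_inner_self_eq_norm_sq, inner_toEuclideanLin_toEuclideanLin,
    ← hX.eigenvectorBasis.sum_inner_mul_inner (toEuclideanLin (Xᵀ * X) x) x]
  refine Finset.sum_congr rfl fun k _ => ?_
  rw [← inner_toEuclideanLin_toEuclideanLin, real_inner_comm _ (toEuclideanLin X x),
    inner_toEuclideanLin_eigenvectorBasis]
  ring

theorem frobNorm_nonneg : 0 ≤ frobNorm X := Real.sqrt_nonneg _

theorem sum_sq_singVals : ∑ k, singVals X k ^ 2 = frobNorm X ^ 2 := by
  have hX := isHermitian_transpose_mul_self X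
  have htrace := hX.trace_eq_sum_eigenvalues
  simp only [RCLike.ofReal_real_eq_id, id] at htrace
  rw [frobNorm, Real.sq_sqrt (by positivity)]
  simp only [sq_singVals X hX]
  rw [← htrace, trace, Finset.sum_comm]
  simp [mul_apply, sq]

theorem card_singVals_ne_zero : #{k | singVals X k ≠ 0} = X.rank := by
  have hX := isHermitian_transpose_mul_self X
  rw [← rank_transpose_mul_self, hX.rank_eq_card_non_zero_eigs, Fintype.card_subtype]
  simp only [singVals_eq_sqrt_eigenvalues X hX, ne_eq,
    Real.sqrt_eq_zero (eigenvalues_transpose_mul_self_nonneg X hX _)]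

theorem nucNorm_le_sqrt_rank_mul_frobNorm : nucNorm X ≤ √X.rank * frobNorm X := by
  have hsupp : nucNorm X = ∑ k ∈ {k | singVals X k ≠ 0}, singVals X k :=
    (Finset.sum_filter_ne_zero _).symm
  have hsq : nucNorm X ^ 2 ≤ X.rank * frobNorm X ^ 2 := by
    rw [hsupp, ← card_singVals_ne_zero, ← sum_sq_singVals]
    refine sq_sum_le_card_mul_sum_sq.trans ?_
    gcongr
    exact Finset.filter_subset _ _
  rw [← Real.sqrt_sq (frobNorm_nonneg X), ← Real.sqrt_mul (Nat.cast_nonneg _)]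
  exact Real.le_sqrt_of_sq_le hsq

theorem opNorm_nonneg : 0 ≤ opNorm X := Real.iSup_nonneg fun _ => Real.sqrt_nonneg _

theorem singVals_le_opNorm (k : Fin n) : singVals X k ≤ opNorm X :=
  le_ciSup (Set.finite_range _).bddAbove k

theorem singVals_le_l2_opNorm (k : Fin n) : singVals X k ≤ ‖X‖ := by
  have hX := isHermitian_transpose_mul_self X
  simpa [norm_toEuclideanLin_eigenvectorBasis X hX, hX.eigenvectorBasis.orthonormal.1 k]
    using norm_toEuclideanLin_le X (hX.eigenvectorBasis k)

theorem norm_toEuclideanLin_le_opNorm_mul (x : EuclideanSpace ℝ (Fin n)) :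
    ‖toEuclideanLin X x‖ ≤ opNorm X * ‖x‖ := by
  have hX := isHermitian_transpose_mul_self X
  refine (sq_le_sq₀ (norm_nonneg _) (mul_nonneg (opNorm_nonneg X) (norm_nonneg x))).mp ?_
  rw [norm_toEuclideanLin_sq X hX, mul_pow, ← hX.eigenvectorBasis.sum_sq_inner_right, mul_sum]
  gcongr with k
  rw [← sq_singVals X hX]
  exact pow_le_pow_left₀ (Real.sqrt_nonneg _) (singVals_le_opNorm X k) 2

theorem opNorm_eq_l2_opNorm : opNorm X = ‖X‖ :=
  le_antisymm (Real.iSup_le (singVals_le_l2_opNorm X) (norm_nonneg _))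
    (ContinuousLinearMap.opNorm_le_bound _ (opNorm_nonneg X)
      (norm_toEuclideanLin_le_opNorm_mul X))

end SingularValues

theorem sum_mul_le_l2_opNorm_mul_nucNorm {m n : ℕ} (G A : Matrix (Fin m) (Fin n) ℝ) :
    ∑ i, ∑ j, G i j * A i j ≤ ‖G‖ * nucNorm A := by
  have hA := isHermitian_transpose_mul_self A
  rw [sum_mul_eq_sum_inner_toEuclideanLin G A hA.eigenvectorBasis, nucNorm, mul_sum]
  refine Finset.sum_le_sum fun k _ => (real_inner_le_norm _ _).trans ?_
  rw [norm_toEuclideanLin_eigenvectorBasis A hA]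
  refine mul_le_mul_of_nonneg_right ?_ (Real.sqrt_nonneg _)
  simpa [hA.eigenvectorBasis.orthonormal.1 k] using norm_toEuclideanLin_le G (hA.eigenvectorBasis k)

theorem sum_mul_sub_le_two_mul_opNorm {m n : ℕ} {c : ℝ} (G A B : Matrix (Fin m) (Fin n) ℝ)
    (hA : nucNorm A ≤ c) (hB : nucNorm B ≤ c) :
    ∑ i, ∑ j, G i j * (A - B) i j ≤ 2 * c * opNorm G := by
  have hsplit : ∑ i, ∑ j, G i j * (A - B) i j
      = ∑ i, ∑ j, G i j * A i j + ∑ i, ∑ j, (-G) i j * B i j := by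
    simp only [Matrix.sub_apply, Matrix.neg_apply, mul_sub, neg_mul, sum_sub_distrib,
      sum_neg_distrib, ← sub_eq_add_neg]
  rw [hsplit, opNorm_eq_l2_opNorm]
  calc _ ≤ ‖G‖ * nucNorm A + ‖-G‖ * nucNorm B :=
        add_le_add (sum_mul_le_l2_opNorm_mul_nucNorm G A)
          (sum_mul_le_l2_opNorm_mul_nucNorm (-G) B)
    _ ≤ ‖G‖ * c + ‖G‖ * c := by rw [norm_neg]; gcongr
    _ = 2 * c * ‖G‖ := by ring

theorem integrable_id_gaussMat (d₁ d₂ : ℕ) :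
    Integrable (fun G : Fin d₁ → Fin d₂ → ℝ => G) (gaussMat d₁ d₂) :=
  Integrable.of_eval fun _ => integrable_comp_eval (f := fun x => x) <|
    Integrable.of_eval fun _ => integrable_eval ((memLp_id_gaussianReal 1).integrable le_rfl)

theorem integrable_opNorm_gaussMat (d₁ d₂ : ℕ) :
    Integrable (fun G => opNorm (Matrix.of G)) (gaussMat d₁ d₂) := by
  simp only [opNorm_eq_l2_opNorm]
  exact ((LinearMap.toContinuousLinearMap (ofLinearEquiv ℝ).toLinearMap).integrable_comp
    (integrable_id_gaussMat d₁ d₂)).norm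

theorem matMeanWidth_le_of_forall_nucNorm_le {d₁ d₂ : ℕ} {K : Set (Matrix (Fin d₁) (Fin d₂) ℝ)}
    {c : ℝ} (hc : 0 ≤ c) (hK : ∀ X ∈ K, nucNorm X ≤ c) :
    matMeanWidth K ≤ 2 * c * ∫ G, opNorm (Matrix.of G) ∂(gaussMat d₁ d₂) := by
  set S : (Fin d₁ → Fin d₂ → ℝ) → Set ℝ :=
    fun G => (fun X : Matrix (Fin d₁) (Fin d₂) ℝ => ∑ i, ∑ j, G i j * X i j) '' (K - K)
  have hle : ∀ G, ∀ y ∈ S G, y ≤ 2 * c * opNorm (Matrix.of G) := by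
    rintro G _ ⟨_, ⟨A, hA, B, hB, rfl⟩, rfl⟩
    exact sum_mul_sub_le_two_mul_opNorm (Matrix.of G) A B (hK A hA) (hK B hB)
  have hnonneg : ∀ G, 0 ≤ sSup (S G) := by
    intro G
    rcases K.eq_empty_or_nonempty with hempty | ⟨A, hA⟩
    · simp [S, hempty]
    · refine le_csSup ⟨_, hle G⟩ ⟨A - A, Set.sub_mem_sub hA hA, ?_⟩
      simp
  rw [matMeanWidth, ← integral_const_mul]
  exact integral_mono_of_nonneg (ae_of_all _ hnonneg)
    ((integrable_opNorm_gaussMat d₁ d₂).const_mul _)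
    (ae_of_all _ fun G => Real.sSup_le (hle G) (mul_nonneg (by positivity) (opNorm_nonneg _)))

theorem Real.sqrt_add_sqrt_le_sqrt_two_mul_add {a b : ℝ} (ha : 0 ≤ a) (hb : 0 ≤ b) :
    √a + √b ≤ √(2 * (a + b)) := by
  rw [Real.le_sqrt (by positivity) (by positivity)]
  nlinarith [sq_nonneg (√a - √b), Real.sq_sqrt ha, Real.sq_sqrt hb]

theorem stmt17 {d₁ d₂ : ℕ} (r : ℕ)
    (hGordon : (∫ G, opNorm (Matrix.of G) ∂(gaussMat d₁ d₂)) ≤ Real.sqrt d₁ + Real.sqrt d₂) :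
    matMeanWidth {X : Matrix (Fin d₁) (Fin d₂) ℝ | frobNorm X = 1 ∧ X.rank ≤ r}
      ≤ 2 * Real.sqrt (2 * r * (d₁ + d₂)) := by
  have hnuc : ∀ X ∈ {X : Matrix (Fin d₁) (Fin d₂) ℝ | frobNorm X = 1 ∧ X.rank ≤ r},
      nucNorm X ≤ √r := fun X ⟨hfrob, hrank⟩ => by
    simpa [hfrob] using (nucNorm_le_sqrt_rank_mul_frobNorm X).trans
      (by gcongr : √X.rank * frobNorm X ≤ √r * frobNorm X)
  calc _ ≤ 2 * √r * ∫ G, opNorm (Matrix.of G) ∂(gaussMat d₁ d₂) :=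
        matMeanWidth_le_of_forall_nucNorm_le (Real.sqrt_nonneg _) hnuc
    _ ≤ 2 * √r * √(2 * (d₁ + d₂)) := by
        gcongr
        exact hGordon.trans (Real.sqrt_add_sqrt_le_sqrt_two_mul_add (by positivity) (by positivity))
    _ = 2 * √(2 * r * (d₁ + d₂)) := by
        rw [mul_assoc, ← Real.sqrt_mul (Nat.cast_nonneg _)]
        ring_nf
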